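/- Let G be a starlike tree on n vertices with central vertex u adjacent to one end of each of r ≥ 3 paths, where all but one path have an even number of vertices and n is even. Then exactly n/2 Laplacian eigenvalues of G are greater than or equal to 2. -/

import Mathlib

open scoped Classical

/-- Base relation for a starlike tree: the central vertex `Sum.inl ()` is adjacent to the
end (index `0`) of each of the `r` branches, and branch `i` is a path on `a i` vertices. -/
def starRel (r : ℕ) (a : Fin r → ℕ) :
    (Unit ⊕ (Σ i : Fin r, Fin (a i))) → (Unit ⊕ (Σ i : Fin r, Fin (a i))) → Prop
  | Sum.inl _, Sum.inr ⟨_, j⟩ => (j : ℕ) = 0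
  | Sum.inr ⟨i, j⟩, Sum.inr ⟨i', j'⟩ => (i : ℕ) = (i' : ℕ) ∧ (j : ℕ) + 1 = (j' : ℕ)
  | _, _ => False

/-- The starlike tree whose central vertex is adjacent to one end of each of the `r`
paths `P_{a 0}, …, P_{a (r-1)}`. -/
def starGraph (r : ℕ) (a : Fin r → ℕ) : SimpleGraph (Unit ⊕ (Σ i : Fin r, Fin (a i))) :=
  SimpleGraph.fromRel (starRel r a)

/-!
Orient the tree away from the centre `u` and let `C = 1 - P`, where `P` has the entry `d w` at
`(w, parent w)`. For signs `d w = ±1` alternating along each branch and ending with `-1` at the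
leaves, and `d u = 0`, one checks vertex by vertex that `L - 2 = Cᵀ diag(d) C`. The matrix `C` is
unipotent, so by Sylvester's law of inertia the number of eigenvalues of `L` below `2` equals the
number of negative signs. A branch with `m` vertices carries `⌈m/2⌉` of them; when exactly one
branch is odd this adds up to `n/2`.
-/

open Matrix Finset

section Inertia

variable {m 𝕜 : Type*} [Fintype m] [DecidableEq m]

theorem Matrix.dotProduct_diagonal_mulVec_self [CommSemiring 𝕜] (d x : m → 𝕜) :
    x ⬝ᵥ (diagonal d *ᵥ x) = ∑ i, d i * x i ^ 2 := by
  simp only [dotProduct, mulVec_diagonal]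
  exact sum_congr rfl fun i _ => by ring

variable [Field 𝕜] [LinearOrder 𝕜] [IsStrictOrderedRing 𝕜]

theorem Matrix.card_neg_le_of_diagonal_eq (d₁ d₂ : m → 𝕜) (B : Matrix m m 𝕜)
    (h : diagonal d₁ = Bᵀ * diagonal d₂ * B) :
    #{i | d₁ i < 0} ≤ #{i | d₂ i < 0} := by
  let f : ({i // d₁ i < 0} → 𝕜) →ₗ[𝕜] ({i // d₂ i < 0} → 𝕜) :=
    LinearMap.funLeft 𝕜 𝕜 Subtype.val ∘ₗ toLin' B ∘ₗ Function.ExtendByZero.linearMap 𝕜 Subtype.val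
  -- On the kernel of `f` the quadratic form of `diagonal d₁` is both `≤ 0` and `≥ 0`.
  have hf : Function.Injective f := by
    rw [← LinearMap.ker_eq_bot, LinearMap.ker_eq_bot']
    intro y hy
    set x : m → 𝕜 := Function.extend Subtype.val y 0
    have hx : ∀ i, ¬ d₁ i < 0 → x i = 0 := fun i hi =>
      Function.extend_apply' _ _ _ fun ⟨j, hj⟩ => hi (hj ▸ j.2)
    have hBx : ∀ i, d₂ i < 0 → (B *ᵥ x) i = 0 := fun i hi => congrFun hy ⟨i, hi⟩
    have hq : x ⬝ᵥ (diagonal d₁ *ᵥ x) = (B *ᵥ x) ⬝ᵥ (diagonal d₂ *ᵥ (B *ᵥ x)) := by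
      rw [h, ← mulVec_mulVec, ← mulVec_mulVec, dotProduct_mulVec _ Bᵀ, vecMul_transpose]
    rw [dotProduct_diagonal_mulVec_self, dotProduct_diagonal_mulVec_self] at hq
    have hle : ∀ i, d₁ i * x i ^ 2 ≤ 0 := fun i => by
      by_cases hi : d₁ i < 0
      · exact mul_nonpos_of_nonpos_of_nonneg hi.le (sq_nonneg _)
      · simp [hx i hi]
    have hge : 0 ≤ ∑ i, d₂ i * (B *ᵥ x) i ^ 2 := sum_nonneg fun i _ => by
      by_cases hi : d₂ i < 0
      · simp [hBx i hi]
      · exact mul_nonneg (not_lt.mp hi) (sq_nonneg _)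
    have hzero := (sum_eq_zero_iff_of_nonpos fun i _ => hle i).mp
      (le_antisymm (sum_nonpos fun i _ => hle i) (hq ▸ hge))
    funext j
    have := hzero j (mem_univ _)
    rw [show x j = y j from Subtype.val_injective.extend_apply _ _ _] at this
    simpa [j.2.ne] using this
  simpa [Module.finrank_fintype_fun_eq_card, Fintype.card_subtype] using
    LinearMap.finrank_le_finrank_of_injective hf

theorem Matrix.card_neg_eq_of_diagonal_eq (d₁ d₂ : m → 𝕜) (B : Matrix m m 𝕜) (hB : IsUnit B)
    (h : diagonal d₁ = Bᵀ * diagonal d₂ * B) :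
    #{i | d₁ i < 0} = #{i | d₂ i < 0} := by
  refine (card_neg_le_of_diagonal_eq d₁ d₂ B h).antisymm
    (card_neg_le_of_diagonal_eq d₂ d₁ B⁻¹ ?_)
  have hdet : IsUnit B.det := (isUnit_iff_isUnit_det B).mp hB
  rw [h, transpose_nonsing_inv, ← mul_assoc, ← mul_assoc,
    nonsing_inv_mul _ (by rwa [det_transpose]), one_mul, mul_assoc, mul_nonsing_inv _ hdet, mul_one]

theorem Matrix.IsHermitian.card_eigenvalues_lt_eq {A : Matrix m m ℝ} (hA : A.IsHermitian) (c : ℝ)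
    (d : m → ℝ) (C : Matrix m m ℝ) (hC : IsUnit C) (h : A - c • 1 = Cᵀ * diagonal d * C) :
    #{i | hA.eigenvalues i < c} = #{i | d i < 0} := by
  set U : Matrix m m ℝ := (hA.eigenvectorUnitary : Matrix m m ℝ)
  have hUU : star U * U = 1 := Unitary.coe_star_mul_self _
  have hUt : star U = Uᵀ := by rw [star_eq_conjTranspose, conjTranspose_eq_transpose_of_trivial]
  have hdiag : star U * A * U = diagonal hA.eigenvalues := by
    simpa [Unitary.conjStarAlgAut_star_apply] using hA.conjStarAlgAut_star_eigenvectorUnitary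
  have hshift : diagonal (hA.eigenvalues - fun _ => c) = (C * U)ᵀ * diagonal d * (C * U) :=
    calc diagonal (hA.eigenvalues - fun _ => c) = star U * A * U - c • (star U * U) := by
          rw [hdiag, hUU]
          ext i j
          by_cases hij : i = j <;> simp [hij]
      _ = star U * (A - c • 1) * U := by
          rw [mul_sub, sub_mul, Matrix.mul_smul, mul_one, Matrix.smul_mul]
      _ = (C * U)ᵀ * diagonal d * (C * U) := by
          rw [h, hUt, transpose_mul]
          simp only [mul_assoc]
  rw [← card_neg_eq_of_diagonal_eq _ d (C * U) (hC.mul Unitary.isUnit_coe) hshift]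
  simp

end Inertia

section RootedForest

variable {V S : Type*} [Fintype V] [DecidableEq V]

theorem Matrix.isNilpotent_of_apply_ne_zero_lt [Semiring S] (M : Matrix V V S) (ht : V → ℕ)
    (h : ∀ u v, M u v ≠ 0 → ht v < ht u) : IsNilpotent M := by
  have hpow : ∀ k u v, (M ^ k) u v ≠ 0 → ht v + k ≤ ht u := by
    intro k
    induction k with
    | zero =>
      intro u v huv
      rw [pow_zero, one_apply] at huv
      have : u = v := by by_contra hne; simp [hne] at huv
      simp [this]
    | succ k ih =>
      intro u v huv
      rw [pow_succ, mul_apply] at huv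
      obtain ⟨w, -, hw⟩ := exists_ne_zero_of_sum_ne_zero huv
      have := ih u w (left_ne_zero_of_mul hw)
      have := h w v (right_ne_zero_of_mul hw)
      omega
  refine ⟨univ.sup ht + 1, ext fun u v => ?_⟩
  by_contra huv
  have := hpow _ u v huv
  have := le_sup (f := ht) (mem_univ u)
  simp only [zero_apply] at *
  omega

variable {R : V → V → Prop} [DecidableRel R]

theorem SimpleGraph.degree_eq_card_add_card_of_adj_iff (G : SimpleGraph V) [DecidableRel G.Adj]
    (hG : ∀ u v, G.Adj u v ↔ R u v ∨ R v u) (hR : ∀ u v, R u v → ¬ R v u) (v : V) :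
    G.degree v = #{w | R w v} + #{w | R v w} := by
  rw [← card_neighborFinset_eq_degree, add_comm, ← card_union_of_disjoint]
  · congr 1
    ext w
    simp [hG]
  · exact disjoint_filter.mpr fun w _ h h' => hR _ _ h h'

variable (R) in
def parentMatrix [Zero S] (d : V → S) : Matrix V V S :=
  of fun w v => if R v w then d w else 0

theorem isUnit_one_sub_parentMatrix [Ring S] (ht : V → ℕ) (hR : ∀ v w, R v w → ht v < ht w)
    (d : V → S) : IsUnit (1 - parentMatrix R d) := by
  refine (isNilpotent_of_apply_ne_zero_lt _ ht fun w v h => hR v w ?_).isUnit_one_sub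
  by_contra hvw
  simp [parentMatrix, hvw] at h

theorem transpose_parentMatrix_mul_diagonal_mul_apply [CommRing S]
    (hpar : ∀ u v w, R u w → R v w → u = v) (d : V → S) (hd : ∀ v w, R v w → d w ^ 2 = 1)
    (u v : V) :
    ((parentMatrix R d)ᵀ * diagonal d * parentMatrix R d) u v =
      if u = v then ∑ w with R u w, d w else 0 := by
  rw [mul_apply]
  simp only [mul_diagonal, transpose_apply, parentMatrix, of_apply, sum_filter]
  split_ifs with huv
  · subst huv
    refine sum_congr rfl fun w _ => ?_
    split_ifs with h
    · linear_combination d w * hd u w h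
    · simp
  · refine sum_eq_zero fun w _ => ?_
    split_ifs with h h' <;> first | simp | exact absurd (hpar u v w h h') huv

theorem SimpleGraph.lapMatrix_sub_two_eq_of_adj_iff [CommRing S] (G : SimpleGraph V)
    [DecidableRel G.Adj] (hG : ∀ u v, G.Adj u v ↔ R u v ∨ R v u) (hR : ∀ u v, R u v → ¬ R v u)
    (hpar : ∀ u v w, R u w → R v w → u = v) (d : V → S) (hd : ∀ v w, R v w → d w ^ 2 = 1)
    (hdeg : ∀ v, (G.degree v : S) - 2 = d v + ∑ w with R v w, d w) :
    G.lapMatrix S - (2 : S) • 1 =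
      (1 - parentMatrix R d)ᵀ * diagonal d * (1 - parentMatrix R d) := by
  set P := parentMatrix R d
  have expand : (1 - P)ᵀ * diagonal d * (1 - P) =
      diagonal d - diagonal d * P - Pᵀ * diagonal d + Pᵀ * diagonal d * P := by
    rw [transpose_sub, transpose_one]
    noncomm_ring
  rw [expand]
  ext u v
  rw [Matrix.add_apply, transpose_parentMatrix_mul_diagonal_mul_apply hpar d hd]
  simp only [Matrix.sub_apply, diagonal_mul, mul_diagonal, transpose_apply, Matrix.smul_apply,
    one_apply, lapMatrix, degMatrix, adjMatrix_apply, diagonal_apply, P, parentMatrix, of_apply]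
  by_cases huv : u = v
  · subst huv
    simp only [if_true, if_neg (G.irrefl (v := u)), sub_zero, if_neg (fun h => hR u u h h),
      mul_zero, zero_mul, smul_eq_mul, mul_one]
    linear_combination hdeg u
  · simp only [huv, if_false, hG, smul_zero, sub_zero, zero_sub, add_zero]
    by_cases h : R u v
    · simp only [h, hR u v h, true_or, if_true, if_false, mul_zero]
      linear_combination hd u v h
    · by_cases h' : R v u
      · simp only [h, h', or_true, if_true, if_false, zero_mul]
        linear_combination hd v u h'
      · simp [h, h']

end RootedForest

theorem Fin.sum_ite_val_eq {M : Type*} [AddCommMonoid M] {m : ℕ} (k : ℕ) (g : Fin m → M) :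
    ∑ x : Fin m, (if (x : ℕ) = k then g x else 0) = if h : k < m then g ⟨k, h⟩ else 0 := by
  split_ifs with h
  · rw [sum_eq_single ⟨k, h⟩ (fun x _ hx => if_neg fun hk => hx (Fin.ext hk)) (by simp)]
    simp
  · exact sum_eq_zero fun x _ => if_neg fun hk : (x : ℕ) = k => h (hk ▸ x.2)

theorem sum_range_ite_even_add (m : ℕ) :
    ∑ j ∈ range m, (if Even (m + j) then 0 else 1) = (m + 1) / 2 := by
  induction m with
  | zero => simp
  | succ m ih =>
    have hcompl : ∑ j ∈ range m, (if Even (m + 1 + j) then 0 else 1) +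
        ∑ j ∈ range m, (if Even (m + j) then 0 else 1) = m := by
      rw [← sum_add_distrib]
      calc _ = ∑ j ∈ range m, 1 := sum_congr rfl fun j _ => by
              simp only [add_right_comm m 1 j, Nat.even_add_one]
              split_ifs <;> rfl
        _ = m := by simp
    rw [sum_range_succ, if_neg (Nat.not_even_iff_odd.mpr ⟨m, by ring⟩)]
    omega

namespace Starlike

variable {r : ℕ} {a : Fin r → ℕ}

/- Without this instance the filters below would carry `Classical.propDecidable`, which blocks
rewriting once `starRel` is unfolded. -/
instance : DecidableRel (starRel r a) := fun u v => by
  rcases u with _ | ⟨i, j⟩ <;> rcases v with _ | ⟨i', j'⟩ <;> unfold starRel <;> infer_instance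

def depth : Unit ⊕ (Σ i : Fin r, Fin (a i)) → ℕ
  | .inl _ => 0
  | .inr ⟨_, j⟩ => j + 1

theorem depth_lt_of_starRel {v w : Unit ⊕ (Σ i : Fin r, Fin (a i))} (h : starRel r a v w) :
    depth v < depth w := by
  rcases v with _ | ⟨i, j⟩ <;> rcases w with _ | ⟨i', j'⟩ <;> simp_all [starRel, depth]

theorem starRel_asymm {v w : Unit ⊕ (Σ i : Fin r, Fin (a i))} (h : starRel r a v w) :
    ¬ starRel r a w v :=
  fun h' => (depth_lt_of_starRel h).asymm (depth_lt_of_starRel h')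

theorem eq_of_starRel_of_starRel {u v w : Unit ⊕ (Σ i : Fin r, Fin (a i))}
    (hu : starRel r a u w) (hv : starRel r a v w) : u = v := by
  rcases w with _ | ⟨i, j⟩
  · rcases u with _ | ⟨_, _⟩ <;> simp [starRel] at hu
  rcases u with _ | ⟨i₁, j₁⟩ <;> rcases v with _ | ⟨i₂, j₂⟩ <;> simp only [starRel] at hu hv
  · rfl
  · omega
  · omega
  · obtain rfl : i₁ = i₂ := Fin.ext (by omega)
    obtain rfl : j₁ = j₂ := Fin.ext (by omega)
    rfl

variable (a) in
/-- `a i + j` is odd exactly when the distance `a i - 1 - j` to the leaf is even, so along each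
branch the signs alternate, starting from `-1` at the leaf. -/
def sign : Unit ⊕ (Σ i : Fin r, Fin (a i)) → ℝ
  | .inl _ => 0
  | .inr ⟨i, j⟩ => if Even (a i + j) then 1 else -1

theorem sq_sign_of_starRel {v w : Unit ⊕ (Σ i : Fin r, Fin (a i))} (h : starRel r a v w) :
    sign a w ^ 2 = 1 := by
  rcases w with _ | ⟨i, j⟩
  · rcases v with _ | ⟨_, _⟩ <;> simp [starRel] at h
  · simp only [sign]
    split_ifs <;> norm_num

theorem starGraph_adj_iff {u v : Unit ⊕ (Σ i : Fin r, Fin (a i))} :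
    (starGraph r a).Adj u v ↔ starRel r a u v ∨ starRel r a v u := by
  rw [starGraph, SimpleGraph.fromRel_adj, and_iff_right_iff_imp]
  rintro (h | h) rfl <;> exact starRel_asymm h h

variable {M : Type*} [AddCommMonoid M]

theorem sum_starRel_inl (f : Unit ⊕ (Σ i : Fin r, Fin (a i)) → M) :
    ∑ w with starRel r a (.inl ()) w, f w =
      ∑ i, if h : 0 < a i then f (.inr ⟨i, ⟨0, h⟩⟩) else 0 := by
  rw [sum_filter, Fintype.sum_sum_type, Fintype.sum_sigma]
  simp [starRel, Fin.sum_ite_val_eq]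

theorem sum_starRel_inr (f : Unit ⊕ (Σ i : Fin r, Fin (a i)) → M) (i : Fin r) (j : Fin (a i)) :
    ∑ w with starRel r a (.inr ⟨i, j⟩) w, f w =
      if h : (j : ℕ) + 1 < a i then f (.inr ⟨i, ⟨j + 1, h⟩⟩) else 0 := by
  rw [sum_filter, Fintype.sum_sum_type, Fintype.sum_sigma]
  simp [starRel, Fin.val_inj, ite_and, Fin.sum_ite_val_eq, eq_comm (a := (j : ℕ) + 1)]

theorem card_starRel_inl : #{u | starRel r a u (.inl ())} = 0 := by
  rw [card_filter, Fintype.sum_sum_type]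
  simp [starRel]

theorem card_starRel_inr (i : Fin r) (j : Fin (a i)) :
    #{u | starRel r a u (.inr ⟨i, j⟩)} = 1 := by
  rw [card_filter, Fintype.sum_sum_type, Fintype.sum_sigma]
  rcases j with ⟨_ | j, hj⟩
  · simp [starRel]
  · simp [starRel, Fin.val_inj, ite_and]
    rw [card_filter, Fin.sum_ite_val_eq, dif_pos (by omega)]

theorem degree_sub_two (hodd : ∃ i₀ : Fin r, Odd (a i₀) ∧ ∀ i, i ≠ i₀ → Even (a i))
    (v : Unit ⊕ (Σ i : Fin r, Fin (a i))) :
    ((starGraph r a).degree v : ℝ) - 2 = sign a v + ∑ w with starRel r a v w, sign a w := by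
  rw [SimpleGraph.degree_eq_card_add_card_of_adj_iff _ (fun _ _ => starGraph_adj_iff)
    (fun _ _ => starRel_asymm) v, card_eq_sum_ones (s := filter (starRel r a v) univ)]
  rcases v with _ | ⟨i, j⟩
  · obtain ⟨i₀, hi₀, heven⟩ := hodd
    rw [card_starRel_inl, sum_starRel_inl, sum_starRel_inl]
    suffices hsum : ∑ i, (((if h : 0 < a i then 1 else 0 : ℕ) : ℝ) -
        if h : 0 < a i then sign a (.inr ⟨i, ⟨0, h⟩⟩) else 0) = 2 by
      rw [sum_sub_distrib] at hsum
      have hcentre : sign a (.inl ()) = 0 := rfl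
      push_cast [zero_add] at hsum ⊢
      linarith
    rw [sum_eq_single i₀ (fun i _ hi => ?_) (by simp)]
    · simp [sign, hi₀.pos, Nat.not_even_iff_odd.mpr hi₀]
      norm_num
    · by_cases hpos : 0 < a i <;> simp [sign, hpos, heven i hi]
  · rw [card_starRel_inr, sum_starRel_inr, sum_starRel_inr]
    split_ifs with h
    · simp only [sign, ← add_assoc, Nat.even_add_one]
      split_ifs <;> norm_num
    · have hleaf : ¬ Even (a i + j) := Nat.not_even_iff_odd.mpr ⟨j, by omega⟩
      simp [sign, hleaf]
      norm_num

theorem two_mul_card_sign_neg (hodd : ∃ i₀ : Fin r, Odd (a i₀) ∧ ∀ i, i ≠ i₀ → Even (a i)) :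
    2 * #{v | sign a v < 0} = 1 + ∑ i, a i := by
  obtain ⟨i₀, hi₀, heven⟩ := hodd
  have hbranch : ∀ i, 2 * ((a i + 1) / 2) = a i + if i = i₀ then 1 else 0 := fun i => by
    split_ifs with hi
    · obtain ⟨k, hk⟩ := hi ▸ hi₀
      omega
    · obtain ⟨k, hk⟩ := heven i hi
      omega
  have hcount : ∀ i, #{j : Fin (a i) | sign a (.inr ⟨i, j⟩) < 0} = (a i + 1) / 2 := fun i => by
    rw [card_filter, ← sum_range_ite_even_add,
      ← Fin.sum_univ_eq_sum_range (fun j => if Even (a i + j) then 0 else 1)]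
    exact sum_congr rfl fun j _ => by by_cases h : Even (a i + j) <;> simp [sign, h]
  rw [card_filter, Fintype.sum_sum_type, Fintype.sum_sigma]
  simp only [← card_filter, hcount]
  have hcentre : #{u : Unit | sign a (.inl u) < 0} = 0 := by simp [sign]
  rw [hcentre, zero_add, mul_sum,
    sum_congr rfl fun i _ => hbranch i, sum_add_distrib, sum_ite_eq', if_pos (mem_univ _),
    add_comm]

end Starlike

theorem starlike_eigenvalues_ge_two_general (r n : ℕ) (a : Fin r → ℕ)
    (hodd : ∃ i₀ : Fin r, Odd (a i₀) ∧ ∀ i, i ≠ i₀ → Even (a i))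
    (hn : n = 1 + ∑ i, a i) :
    Multiset.card ((((starGraph r a).lapMatrix ℝ).charpoly.roots).filter
        (fun μ => (2 : ℝ) ≤ μ)) = n / 2 := by
  have hL := (starGraph r a).isHermitian_lapMatrix ℝ
  have hldl := SimpleGraph.lapMatrix_sub_two_eq_of_adj_iff _ (fun _ _ => Starlike.starGraph_adj_iff)
    (fun _ _ => Starlike.starRel_asymm) (fun _ _ _ => Starlike.eq_of_starRel_of_starRel)
    _ (fun _ _ => Starlike.sq_sign_of_starRel) (Starlike.degree_sub_two hodd)
  have hlt := hL.card_eigenvalues_lt_eq 2 _ _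
    (isUnit_one_sub_parentMatrix Starlike.depth (fun _ _ => Starlike.depth_lt_of_starRel) _) hldl
  have hneg := Starlike.two_mul_card_sign_neg hodd
  have hsplit := card_filter_add_card_filter_not (s := univ) (fun v => hL.eigenvalues v < 2)
  have hcard : #(univ : Finset (Unit ⊕ Σ i : Fin r, Fin (a i))) = 1 + ∑ i, a i := by simp
  rw [hL.roots_charpoly_eq_eigenvalues, Multiset.filter_map, Multiset.card_map]
  change #{v | 2 ≤ hL.eigenvalues v} = n / 2
  simp only [not_lt] at hsplit
  omega

/-- For a starlike tree on `n` vertices whose central vertex is adjacent to one end of each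
of `r ≥ 3` paths, all but one of which have an even number of vertices (`n` even), exactly
`n/2` Laplacian eigenvalues are greater than or equal to `2`. -/
theorem starlike_eigenvalues_ge_two (r n : ℕ) (a : Fin r → ℕ) (hr : 3 ≤ r)
    (hpos : ∀ i, 1 ≤ a i)
    (hodd : ∃ i₀ : Fin r, Odd (a i₀) ∧ ∀ i, i ≠ i₀ → Even (a i))
    (hn : n = 1 + ∑ i, a i) (hne : Even n) :
    Multiset.card ((((starGraph r a).lapMatrix ℝ).charpoly.roots).filter
        (fun μ => (2 : ℝ) ≤ μ)) = n / 2 :=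
  starlike_eigenvalues_ge_two_general r n a hodd hn
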